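/- arXiv:2601.16922 — 5 statements merged into one kernel-verified Lean document; each statement's English description precedes it below -/
import Mathlib

section
/- There exist a family of groups G and a hypothesis class H on the same infinite input domain X, each with VC dimension 1, such that the class of group-realizable concepts C(G,H) has infinite VC dimension. Specifically, if X is infinite, H consists of the two constant functions (constant +1 and constant -1), and G is the family of all singleton subsets of X, then C(G,H) equals the set of all functions X → {-1,+1}, and hence shatters finite subsets of X of every size. -/
/-!
Every function is constant on a singleton, so with singleton groups and both constant
hypotheses every labelling is group-realizable, and an infinite domain has finite sets of
every size. Singletons cannot trace a two-element set, and constants cannot separate two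
points, so both `G` and `H` have VC dimension exactly one.
-/

/-- The class of group-realizable concepts with respect to a family of groups `G`
and a hypothesis class `H` (labels encoded as `Bool`). -/
def GRConcepts {X : Type*} (G : Set (Set X)) (H : Set (X → Bool)) : Set (X → Bool) :=
  {c | ∀ g ∈ G, ∃ h ∈ H, ∀ x ∈ g, c x = h x}

/-- A class of Boolean-valued functions shatters a finite set. -/
def Shatters {X : Type*} (F : Set (X → Bool)) (S : Finset X) : Prop :=
  ∀ b : X → Bool, ∃ f ∈ F, ∀ x ∈ S, f x = b x

/-- A family of sets shatters a finite set. -/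
def SetShatters {X : Type*} (G : Set (Set X)) (S : Finset X) : Prop :=
  ∀ T ⊆ S, ∃ g ∈ G, ∀ x ∈ S, x ∈ g ↔ x ∈ T

section

variable {X : Type*}

theorem SetShatters.card_le_one {G : Set (Set X)} (hG : ∀ g ∈ G, g.Subsingleton)
    {S : Finset X} (hS : SetShatters G S) : S.card ≤ 1 := by
  obtain ⟨g, hg, hgS⟩ := hS S subset_rfl
  exact Finset.card_le_one.2 fun x hx y hy => hG g hg ((hgS x hx).2 hx) ((hgS y hy).2 hy)

theorem setShatters_singleton {G : Set (Set X)} {x : X} (hx : {x} ∈ G)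
    {g : Set X} (hg : g ∈ G) (hxg : x ∉ g) : SetShatters G {x} := by
  intro T hT
  rcases Finset.subset_singleton_iff.1 hT with rfl | rfl
  · exact ⟨g, hg, by simpa using hxg⟩
  · exact ⟨{x}, hx, by simp⟩

theorem Shatters.card_le_one {H : Set (X → Bool)} (hH : ∀ h ∈ H, ∃ b, h = fun _ => b)
    {S : Finset X} (hS : Shatters H S) : S.card ≤ 1 := by
  classical
  refine Finset.card_le_one.2 fun x hx y hy => ?_
  by_contra hxy
  obtain ⟨h, hH', hxy'⟩ := hS fun z => decide (z = x)
  obtain ⟨b, rfl⟩ := hH h hH'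
  have hbx : b = true := by simpa using hxy' x hx
  have hby : b = false := by simpa [Ne.symm hxy] using hxy' y hy
  exact absurd (hbx.symm.trans hby) (by decide)

theorem shatters_singleton {H : Set (X → Bool)} (hH : ∀ b, (fun _ => b) ∈ H) (x : X) :
    Shatters H {x} :=
  fun c => ⟨fun _ => c x, hH (c x), by simp⟩

theorem grConcepts_singletons_eq_univ {H : Set (X → Bool)} (hH : ∀ b, (fun _ => b) ∈ H) :
    GRConcepts {s | ∃ x : X, s = {x}} H = Set.univ := by
  refine Set.eq_univ_of_forall fun c g ⟨x, hgx⟩ => ⟨fun _ => c x, hH (c x), ?_⟩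
  subst hgx
  simp

theorem shatters_univ (S : Finset X) : Shatters (Set.univ : Set (X → Bool)) S :=
  fun b => ⟨b, Set.mem_univ b, fun _ _ => rfl⟩

end

theorem stmt0 (X : Type*) (hX : Infinite X) :
    let H : Set (X → Bool) := {fun _ => true, fun _ => false}
    let G : Set (Set X) := {s | ∃ x : X, s = {x}}
    -- G has VC dimension 1
    ((∀ S : Finset X, SetShatters G S → S.card ≤ 1) ∧
      ∃ S : Finset X, S.card = 1 ∧ SetShatters G S) ∧
    -- H has VC dimension 1
    ((∀ S : Finset X, Shatters H S → S.card ≤ 1) ∧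
      ∃ S : Finset X, S.card = 1 ∧ Shatters H S) ∧
    -- C(G,H) is the set of all functions X → Bool
    GRConcepts G H = Set.univ ∧
    -- hence C(G,H) shatters finite subsets of every size: infinite VC dimension
    (∀ n : ℕ, ∃ S : Finset X, S.card = n ∧ Shatters (GRConcepts G H) S) := by
  intro H G
  have hH : ∀ b, (fun _ => b) ∈ H := by
    intro b
    cases b <;> simp [H]
  have hG : ∀ g ∈ G, g.Subsingleton := by
    rintro g ⟨x, rfl⟩
    exact Set.subsingleton_singleton
  obtain ⟨x, y, hxy⟩ := exists_pair_ne X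
  refine ⟨⟨fun S => SetShatters.card_le_one hG, {x}, Finset.card_singleton x,
      setShatters_singleton ⟨x, rfl⟩ ⟨y, rfl⟩ hxy⟩,
    ⟨fun S => Shatters.card_le_one ?_, {x}, Finset.card_singleton x, shatters_singleton hH x⟩,
    grConcepts_singletons_eq_univ hH, fun n => ?_⟩
  · rintro h (rfl | rfl)
    exacts [⟨true, rfl⟩, ⟨false, rfl⟩]
  · obtain ⟨S, hS⟩ := Infinite.exists_subset_card_eq X n
    exact ⟨S, hS, grConcepts_singletons_eq_univ hH ▸ shatters_univ S⟩
end

section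
/- Let F = { x ↦ 1[x ∈ g]·1[c(x) ≠ c*(x)] : g ∈ G, c ∈ C(G,H) } for a fixed c* ∈ C(G,H). Then for any k points x₁,…,x_k ∈ X, the number of distinct vectors (f(x₁),…,f(x_k)) with f ∈ F is at most S_X(G,k) · sup_{g∈G} S_g(H,k), where S_X(G,k) is the k-th shattering coefficient of G (viewed as {0,1}-valued functions) and S_g(H,k) is the k-th shattering coefficient of H restricted to g. In particular, if G has VC dimension d_G and sup_{g∈G} VCdim(H|_g) = d, this is at most (∑_{i=0}^{d_G} (k choose i)) · (∑_{i=0}^{d} (k choose i)). -/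
open scoped Classical

/-! The pattern of `1[· ∈ g] · 1[c ≠ c*]` on `x₁, …, x_k` is determined by the pattern `u` of `g`
and the masked pattern `u ∧ h` of any `h ∈ H` agreeing with `c` on `g`. Sauer's lemma bounds the
patterns `u` by the VC dimension of `G`; for a fixed `u`, the masked patterns can only shatter
indices with `xᵢ ∈ g`, so Sauer's lemma for `H` restricted to `g` bounds them. -/

section Shattering

variable {ι X : Type*}

lemma Shatters.of_forall_eqOn {P Q : Set (ι → Bool)} {S : Finset ι} (hP : Shatters P S)
    (hPQ : ∀ p ∈ P, ∃ q ∈ Q, ∀ i ∈ S, p i = q i) : Shatters Q S := fun b => by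
  obtain ⟨p, hp, hpb⟩ := hP b
  obtain ⟨q, hq, hpq⟩ := hPQ p hp
  exact ⟨q, hq, fun i hi => (hpq i hi).symm.trans (hpb i hi)⟩

variable {F : Set (X → Bool)} {x : ι → X} {S : Finset ι}

lemma Shatters.injOn_of_comp (h : Shatters ((· ∘ x) '' F) S) : Set.InjOn x S := by
  intro i hi j hj hij
  by_contra hne
  obtain ⟨_, ⟨f, _, rfl⟩, hf⟩ := h fun l => decide (l = i)
  have hfi := hf i hi
  have hfj := hf j hj
  simp_all [eq_comm]

lemma Shatters.image_of_comp (h : Shatters ((· ∘ x) '' F) S) : Shatters F (S.image x) := by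
  intro b
  obtain ⟨_, ⟨f, hf, rfl⟩, hfb⟩ := h (b ∘ x)
  refine ⟨f, hf, fun y hy => ?_⟩
  obtain ⟨i, hi, rfl⟩ := Finset.mem_image.1 hy
  exact hfb i hi

lemma Shatters.card_image_of_comp [DecidableEq X] (h : Shatters ((· ∘ x) '' F) S) :
    (S.image x).card = S.card :=
  Finset.card_image_of_injOn h.injOn_of_comp

lemma setShatters_of_shatters_indicators {G : Set (Set X)} {T : Finset X}
    (h : Shatters ((fun g y => decide (y ∈ g)) '' G) T) : SetShatters G T := by
  intro T' _
  obtain ⟨_, ⟨g, hg, rfl⟩, hgT⟩ := h fun y => decide (y ∈ T')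
  exact ⟨g, hg, fun y hy => by simpa using hgT y hy⟩

lemma ncard_le_sum_choose_of_shatters [Fintype ι] [DecidableEq ι] {m : ℕ} (P : Set (ι → Bool))
    (hP : ∀ S : Finset ι, Shatters P S → S.card ≤ m) :
    P.ncard ≤ ∑ i ∈ Finset.range (m + 1), (Fintype.card ι).choose i := by
  let support (f : ι → Bool) : Finset ι := Finset.univ.filter (f · = true)
  have support_inj : support.Injective := fun f g hfg => funext fun i => by
    have hi := Finset.ext_iff.1 hfg i
    simp only [support, Finset.mem_filter, Finset.mem_univ, true_and] at hi
    exact Bool.eq_iff_iff.2 hi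
  set 𝒜 := P.toFinset.image support
  have h𝒜 : 𝒜.vcDim ≤ m := Finset.sup_le fun S hS => hP S fun b => by
    obtain ⟨_, hu, hSu⟩ := Finset.mem_shatterer.1 hS (Finset.filter_subset (b · = true) S)
    obtain ⟨f, hf, rfl⟩ := Finset.mem_image.1 hu
    refine ⟨f, Set.mem_toFinset.1 hf, fun i hi => ?_⟩
    simpa [support, hi] using Finset.ext_iff.1 hSu i
  calc P.ncard = 𝒜.card := by
        rw [Finset.card_image_of_injective _ support_inj, Set.ncard_eq_toFinset_card']
    _ ≤ 𝒜.shatterer.card := 𝒜.card_le_card_shatterer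
    _ ≤ ∑ i ∈ Finset.Iic 𝒜.vcDim, (Fintype.card ι).choose i := Finset.card_shatterer_le_sum_vcDim
    _ ≤ _ := by
        rw [Nat.range_succ_eq_Iic]
        exact Finset.sum_le_sum_of_subset (Finset.Iic_subset_Iic.2 h𝒜)

end Shattering

section Patterns

variable {X : Type*} {k : ℕ} (x : Fin k → X)

lemma ncard_setPatterns_le {G : Set (Set X)} {dG : ℕ}
    (hdG : ∀ S : Finset X, SetShatters G S → S.card ≤ dG) :
    ((fun g i => decide (x i ∈ g)) '' G).ncard ≤ ∑ i ∈ Finset.range (dG + 1), k.choose i := by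
  have hP : ∀ S, Shatters ((fun g i => decide (x i ∈ g)) '' G) S → S.card ≤ dG := by
    intro S hS
    replace hS : Shatters ((· ∘ x) '' ((fun g y => decide (y ∈ g)) '' G)) S := by
      rwa [Set.image_image]
    rw [← hS.card_image_of_comp]
    exact hdG _ (setShatters_of_shatters_indicators hS.image_of_comp)
  simpa using ncard_le_sum_choose_of_shatters _ hP

lemma ncard_maskedPatterns_le {g : Set X} {H : Set (X → Bool)} {d : ℕ}
    (hd : ∀ S : Finset X, ↑S ⊆ g → Shatters H S → S.card ≤ d) :
    ((fun h i => decide (x i ∈ g) && h (x i)) '' H).ncard ≤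
      ∑ i ∈ Finset.range (d + 1), k.choose i := by
  have hP : ∀ S, Shatters ((fun h i => decide (x i ∈ g) && h (x i)) '' H) S → S.card ≤ d := by
    intro S hS
    have hSg : ∀ i ∈ S, x i ∈ g := fun i hi => by
      obtain ⟨_, ⟨h, _, rfl⟩, hh⟩ := hS fun _ => true
      exact of_decide_eq_true (Bool.and_eq_true_iff.1 (hh i hi)).1
    have hH : Shatters ((· ∘ x) '' H) S := hS.of_forall_eqOn <| by
      rintro _ ⟨h, hh, rfl⟩
      exact ⟨h ∘ x, ⟨h, hh, rfl⟩, fun i hi => by simp [hSg i hi]⟩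
    rw [← hH.card_image_of_comp]
    refine hd _ (fun y hy => ?_) hH.image_of_comp
    obtain ⟨i, hi, rfl⟩ := Finset.mem_image.1 hy
    exact hSg i hi
  simpa using ncard_le_sum_choose_of_shatters _ hP

lemma errorPatterns_subset_biUnion (G : Set (Set X)) (H : Set (X → Bool)) (cs : X → Bool) :
    {v : Fin k → Bool | ∃ g ∈ G, ∃ c ∈ GRConcepts G H,
        v = fun i => decide (x i ∈ g) && decide (c (x i) ≠ cs (x i))} ⊆
      ⋃ u ∈ (fun g i => decide (x i ∈ g)) '' G,
        (fun w i => u i && (w i != cs (x i))) '' ((fun h i => u i && h (x i)) '' H) := by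
  rintro _ ⟨g, hg, c, hc, rfl⟩
  obtain ⟨h, hh, hch⟩ := hc g hg
  refine Set.mem_biUnion ⟨g, hg, rfl⟩ ⟨_, ⟨h, hh, rfl⟩, funext fun i => ?_⟩
  by_cases hi : x i ∈ g
  · simp [hi, hch _ hi, bne, Bool.beq_eq_decide_eq]
  · simp [hi]

end Patterns

theorem stmt4_general {X : Type*} (G : Set (Set X)) (H : Set (X → Bool))
    (cs : X → Bool)
    (dG d : ℕ)
    -- G has VC dimension at most dG
    (hdG : ∀ S : Finset X, SetShatters G S → S.card ≤ dG)
    -- for every g ∈ G, H restricted to g has VC dimension at most d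
    (hd : ∀ g ∈ G, ∀ S : Finset X, ↑S ⊆ g → Shatters H S → S.card ≤ d)
    (k : ℕ) (x : Fin k → X) :
    -- the number of behavior patterns of
    -- F = { 1[·∈g]·1[c ≠ c*] : g ∈ G, c ∈ C(G,H) } on x₁,…,x_k is at most the
    -- product of the Sauer bounds for G and for H restricted to groups
    Nat.card {v : Fin k → Bool //
        ∃ g ∈ G, ∃ c ∈ GRConcepts G H,
          v = fun i => decide (x i ∈ g) && decide (c (x i) ≠ cs (x i))} ≤
      (∑ i ∈ Finset.range (dG + 1), k.choose i) *
        (∑ i ∈ Finset.range (d + 1), k.choose i) := by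
  set U := (fun g i => decide (x i ∈ g)) '' G
  set W := fun u : Fin k → Bool => (fun h i => u i && h (x i)) '' H
  have hW : ∀ u ∈ U.toFinset, (W u).ncard ≤ ∑ i ∈ Finset.range (d + 1), k.choose i := by
    simp only [Set.mem_toFinset]
    rintro _ ⟨g, hg, rfl⟩
    exact ncard_maskedPatterns_le x (hd g hg)
  calc _ = _ := Nat.card_coe_set_eq _
    _ ≤ (⋃ u ∈ U.toFinset, (fun w i => u i && (w i != cs (x i))) '' W u).ncard :=
        Set.ncard_le_ncard ((errorPatterns_subset_biUnion x G H cs).trans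
          (Set.biUnion_subset_biUnion_left fun _ => Set.mem_toFinset.2)) (Set.toFinite _)
    _ ≤ ∑ u ∈ U.toFinset, ((fun w i => u i && (w i != cs (x i))) '' W u).ncard :=
        Finset.set_ncard_biUnion_le _ _
    _ ≤ ∑ u ∈ U.toFinset, (W u).ncard :=
        Finset.sum_le_sum fun u _ => Set.ncard_image_le (Set.toFinite _)
    _ ≤ U.toFinset.card * ∑ i ∈ Finset.range (d + 1), k.choose i :=
        Finset.sum_le_card_nsmul _ _ _ hW
    _ ≤ _ := by
        rw [← Set.ncard_eq_toFinset_card']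
        exact Nat.mul_le_mul_right _ (ncard_setPatterns_le x hdG)

theorem stmt4 {X : Type*} (G : Set (Set X)) (H : Set (X → Bool))
    (cs : X → Bool) (hcs : cs ∈ GRConcepts G H)
    (dG d : ℕ)
    -- G has VC dimension at most dG
    (hdG : ∀ S : Finset X, SetShatters G S → S.card ≤ dG)
    -- for every g ∈ G, H restricted to g has VC dimension at most d
    (hd : ∀ g ∈ G, ∀ S : Finset X, ↑S ⊆ g → Shatters H S → S.card ≤ d)
    (k : ℕ) (x : Fin k → X) :
    -- the number of behavior patterns of
    -- F = { 1[·∈g]·1[c ≠ c*] : g ∈ G, c ∈ C(G,H) } on x₁,…,x_k is at most the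
    -- product of the Sauer bounds for G and for H restricted to groups
    Nat.card {v : Fin k → Bool //
        ∃ g ∈ G, ∃ c ∈ GRConcepts G H,
          v = fun i => decide (x i ∈ g) && decide (c (x i) ≠ cs (x i))} ≤
      (∑ i ∈ Finset.range (dG + 1), k.choose i) *
        (∑ i ∈ Finset.range (d + 1), k.choose i) :=
  stmt4_general G H cs dG d hdG hd k x
end

section
/- In the reduction from ONE-IN-THREE 3SAT: the 3-CNF formula φ with variables x₁,…,x_n and clauses C₁,…,C_m has a truth assignment in which every clause has exactly one true literal if and only if there exists a group-realizable concept c ∈ C(G,H) (for the constructed G and H) that is consistent with the labeled dataset S = ((C₁,+1),…,(C_m,+1)). -/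
/-- In the reduction, the group `gᵢ` associated with clause `i`: the three points
for the variables of the clause's literals, together with the clause point. A
literal is encoded as a pair `(variable, polarity)`. -/
def grp {n m : ℕ} (lit : Fin m → Fin 3 → Fin n × Bool) (i : Fin m) :
    Set (Fin n ⊕ Fin m) :=
  {Sum.inl (lit i 0).1, Sum.inl (lit i 1).1, Sum.inl (lit i 2).1, Sum.inr i}

/-- The hypothesis class `Hᵢᵗ`: hypotheses asserting that literal `t` of clause `i`
is the unique true literal of clause `i`. -/
def Hsub {n m : ℕ} (lit : Fin m → Fin 3 → Fin n × Bool) (i : Fin m) (t : Fin 3) :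
    Set ((Fin n ⊕ Fin m) → Bool) :=
  {h | h (Sum.inl (lit i t).1) = (lit i t).2 ∧
       (∀ s : Fin 3, s ≠ t → h (Sum.inl (lit i s).1) = !(lit i s).2) ∧
       h (Sum.inr i) = true ∧
       ∀ j : Fin m, j ≠ i → h (Sum.inr j) = false}

/-- The group family of the reduction. -/
def GrpFam {n m : ℕ} (lit : Fin m → Fin 3 → Fin n × Bool) : Set (Set (Fin n ⊕ Fin m)) :=
  Set.range (grp lit)

/-- The hypothesis class of the reduction: `H = ⋃ᵢ (Hᵢ¹ ∪ Hᵢ² ∪ Hᵢ³)`. -/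
def Hyp {n m : ℕ} (lit : Fin m → Fin 3 → Fin n × Bool) : Set ((Fin n ⊕ Fin m) → Bool) :=
  ⋃ i, ⋃ t, Hsub lit i t

/-!
A hypothesis of `Hⱼ` labels the clause point `Cᵢ` with `-1` unless `j = i`, so a concept that
labels every clause point `+1` agrees on `gᵢ` with some `h ∈ Hᵢᵗ`; on the variable points this
says exactly that literal `t` is the only true literal of clause `i`. Conversely, if `t` is the
true literal of clause `i` under `σ`, the concept `σ ⊔ (fun _ => +1)` agrees on `gᵢ` with the
hypothesis of `Hᵢᵗ` that follows `σ` on the variables.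
-/

theorem Bool.existsUnique_eq_iff {ι : Type*} (f g : ι → Bool) :
    (∃! t, f t = g t) ↔ ∃ t, f t = g t ∧ ∀ s, s ≠ t → f s = !g s := by
  simp only [Bool.eq_not]
  exact ⟨fun ⟨t, ht, huniq⟩ => ⟨t, ht, fun s hs heq => hs (huniq s heq)⟩,
    fun ⟨t, ht, hne⟩ => ⟨t, ht, fun s hs => by_contra fun hst => hne s hst hs⟩⟩

section Reduction

variable {n m : ℕ} {lit : Fin m → Fin 3 → Fin n × Bool}

theorem inl_mem_grp (i : Fin m) (s : Fin 3) : Sum.inl (lit i s).1 ∈ grp lit i := by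
  fin_cases s <;> simp [grp]

theorem inr_mem_grp (i : Fin m) : Sum.inr i ∈ grp lit i := by
  simp [grp]

theorem sumElim_mem_Hsub {σ : Fin n → Bool} {i : Fin m} {t : Fin 3}
    (ht : σ (lit i t).1 = (lit i t).2) (hs : ∀ s, s ≠ t → σ (lit i s).1 = !(lit i s).2) :
    Sum.elim σ (fun j => decide (j = i)) ∈ Hsub lit i t :=
  ⟨ht, hs, by simp, fun j hj => by simp [hj]⟩

theorem eq_of_mem_Hsub_of_eqOn_grp {c h : Fin n ⊕ Fin m → Bool} {i j : Fin m} {t : Fin 3}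
    (hh : h ∈ Hsub lit j t) (hagree : ∀ x ∈ grp lit i, c x = h x) (hc : c (Sum.inr i) = true) :
    j = i := by
  by_contra hji
  have hfalse : c (Sum.inr i) = false :=
    (hagree _ (inr_mem_grp i)).trans (hh.2.2.2 i (Ne.symm hji))
  simp [hc] at hfalse

theorem existsUnique_of_mem_Hsub_of_eqOn_grp {c h : Fin n ⊕ Fin m → Bool} {i : Fin m}
    {t : Fin 3} (hh : h ∈ Hsub lit i t) (hagree : ∀ x ∈ grp lit i, c x = h x) :
    ∃! s : Fin 3, c (Sum.inl (lit i s).1) = (lit i s).2 := by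
  obtain ⟨htrue, hfalse, -⟩ := hh
  refine (Bool.existsUnique_eq_iff _ _).2 ⟨t, ?_, fun s hs => ?_⟩
  · rw [hagree _ (inl_mem_grp i t), htrue]
  · rw [hagree _ (inl_mem_grp i s), hfalse s hs]

end Reduction

theorem stmt10_general (n m : ℕ) (lit : Fin m → Fin 3 → Fin n × Bool) :
    -- φ has an assignment making exactly one literal true in each clause iff
    -- some group-realizable concept is consistent with S = ((C₁,+1),…,(C_m,+1))
    (∃ σ : Fin n → Bool, ∀ i : Fin m, ∃! t : Fin 3, σ (lit i t).1 = (lit i t).2) ↔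
      (∃ c ∈ GRConcepts (GrpFam lit) (Hyp lit), ∀ i : Fin m, c (Sum.inr i) = true) := by
  constructor
  · rintro ⟨σ, hσ⟩
    refine ⟨Sum.elim σ (fun _ => true), ?_, fun i => rfl⟩
    rintro g ⟨i, rfl⟩
    obtain ⟨t, ht, hs⟩ := (Bool.existsUnique_eq_iff _ _).1 (hσ i)
    refine ⟨_, Set.mem_iUnion₂.2 ⟨i, t, sumElim_mem_Hsub ht hs⟩, ?_⟩
    rintro x (rfl | rfl | rfl | rfl) <;> simp
  · rintro ⟨c, hc, hcons⟩
    refine ⟨fun x => c (Sum.inl x), fun i => ?_⟩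
    obtain ⟨h, hH, hagree⟩ := hc (grp lit i) ⟨i, rfl⟩
    obtain ⟨j, t, hh⟩ := Set.mem_iUnion₂.1 hH
    obtain rfl := eq_of_mem_Hsub_of_eqOn_grp hh hagree (hcons i)
    exact existsUnique_of_mem_Hsub_of_eqOn_grp hh hagree

theorem stmt10 (n m : ℕ) (lit : Fin m → Fin 3 → Fin n × Bool)
    -- each clause's three literals are over three distinct variables
    (hdistinct : ∀ i, Function.Injective fun t => (lit i t).1) :
    -- φ has an assignment making exactly one literal true in each clause iff
    -- some group-realizable concept is consistent with S = ((C₁,+1),…,(C_m,+1))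
    (∃ σ : Fin n → Bool, ∀ i : Fin m, ∃! t : Fin 3, σ (lit i t).1 = (lit i t).2) ↔
      (∃ c ∈ GRConcepts (GrpFam lit) (Hyp lit), ∀ i : Fin m, c (Sum.inr i) = true) :=
  stmt10_general n m lit
end

section
/- In the ONE-IN-THREE 3SAT reduction, given a truth assignment σ : {x₁,…,x_n} → {true, false} in which every clause has exactly one true literal, the function c defined by c(x_k) = +1 if σ(x_k) = true and −1 otherwise, and c(Cᵢ) = +1 for all i, is a group-realizable concept in C(G,H) consistent with S = ((C₁,+1),…,(C_m,+1)). -/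
/-!
The witness for the group of clause `i` is the hypothesis that follows `σ` on the variables and
takes the value `true` on clause `i` only. It lies in `Hᵢᵗ` for the unique true literal `t`
precisely because the other two literals of the clause are false under `σ`, and it agrees with `c`
on `gᵢ`, whose only clause point is `Cᵢ`.
-/

def clauseHyp {n m : ℕ} (σ : Fin n → Bool) (i : Fin m) : (Fin n ⊕ Fin m) → Bool :=
  Sum.elim σ fun j => decide (j = i)

theorem clauseHyp_mem_Hsub {n m : ℕ} (lit : Fin m → Fin 3 → Fin n × Bool) (σ : Fin n → Bool)
    (i : Fin m) (t : Fin 3) (ht : σ (lit i t).1 = (lit i t).2)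
    (hs : ∀ s, s ≠ t → σ (lit i s).1 ≠ (lit i s).2) :
    clauseHyp σ i ∈ Hsub lit i t :=
  ⟨ht, fun s hst => Bool.eq_not_iff.2 (hs s hst), by simp [clauseHyp],
    fun j hj => by simp [clauseHyp, hj]⟩

theorem eqOn_clauseHyp_grp {n m : ℕ} (lit : Fin m → Fin 3 → Fin n × Bool) (σ : Fin n → Bool)
    (i : Fin m) : Set.EqOn (Sum.elim σ fun _ => true) (clauseHyp σ i) (grp lit i) := by
  rintro x (rfl | rfl | rfl | rfl) <;> simp [clauseHyp]

theorem stmt12_general (n m : ℕ) (lit : Fin m → Fin 3 → Fin n × Bool)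
    (σ : Fin n → Bool)
    -- every clause has exactly one true literal under σ
    (hσ : ∀ i : Fin m, ∃! t : Fin 3, σ (lit i t).1 = (lit i t).2) :
    -- the function c given by σ on variable points and +1 on clause points is a
    -- group-realizable concept consistent with S = ((C₁,+1),…,(C_m,+1))
    (Sum.elim σ (fun _ => true)) ∈ GRConcepts (GrpFam lit) (Hyp lit) ∧
    ∀ i : Fin m, Sum.elim σ (fun _ => true) (Sum.inr i) = true := by
  refine ⟨?_, fun _ => rfl⟩
  rintro _ ⟨i, rfl⟩
  obtain ⟨t, ht, huniq⟩ := hσ i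
  have hmem : clauseHyp σ i ∈ Hsub lit i t :=
    clauseHyp_mem_Hsub lit σ i t ht fun s hst hs => hst (huniq s hs)
  exact ⟨clauseHyp σ i, Set.mem_iUnion₂.2 ⟨i, t, hmem⟩, eqOn_clauseHyp_grp lit σ i⟩

theorem stmt12 (n m : ℕ) (lit : Fin m → Fin 3 → Fin n × Bool)
    -- each clause's three literals are over three distinct variables
    (hdistinct : ∀ i, Function.Injective fun t => (lit i t).1)
    (σ : Fin n → Bool)
    -- every clause has exactly one true literal under σ
    (hσ : ∀ i : Fin m, ∃! t : Fin 3, σ (lit i t).1 = (lit i t).2) :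
    -- the function c given by σ on variable points and +1 on clause points is a
    -- group-realizable concept consistent with S = ((C₁,+1),…,(C_m,+1))
    (Sum.elim σ (fun _ => true)) ∈ GRConcepts (GrpFam lit) (Hyp lit) ∧
    ∀ i : Fin m, Sum.elim σ (fun _ => true) (Sum.inr i) = true :=
  stmt12_general n m lit σ hσ
end

section
/- Let G be a family of subsets of X with VC dimension d_G < ∞ and let H have VC dimension d_H < ∞. Then for any fixed c* : X → {−1,+1}, the class F = { x ↦ 1[x ∈ g]·1[c(x) ≠ c*(x)] : g ∈ G, c ∈ C(G,H) } has VC dimension at most O((d_G + d_H)·log(d_G + d_H + 1)); in particular F has finite VC dimension even though C(G,H) may have infinite VC dimension. -/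
/-!
Restricted to a finite set `S`, a member `1[· ∈ g] · 1[c ≠ c*]` of `F` is the indicator of
`g ∩ {h ≠ c*}` for some `h ∈ H`, because `c` agrees with some `h ∈ H` on `g`. The family
`{ {h ≠ c*} | h ∈ H }` shatters only sets that `H` shatters, so if `F` shatters `S`,
Sauer–Shelah applied to both factors gives `2 ^ |S| ≤ (|S| + 1) ^ dG · (|S| + 1) ^ dH`. Finally
`2 ^ n ≤ (n + 1) ^ d` forces `n ≤ 5 d log (d + 1)`.
-/

open scoped Classical

open Finset

lemma sum_choose_le_succ_pow (n d : ℕ) : ∑ k ∈ Iic d, n.choose k ≤ (n + 1) ^ d := by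
  rw [← Nat.range_succ_eq_Iic, add_pow]
  refine sum_le_sum fun k hk => ?_
  rw [one_pow, mul_one]
  calc n.choose k ≤ n ^ k := Nat.choose_le_pow n k
    _ ≤ n ^ k * d.choose k :=
      Nat.le_mul_of_pos_right _ (Nat.choose_pos (Nat.lt_succ_iff.1 (mem_range.1 hk)))

lemma SetShatters.mono {X : Type*} {G G' : Set (Set X)} {S : Finset X} (hG : SetShatters G S)
    (hGG' : G ⊆ G') : SetShatters G' S := fun T hT =>
  let ⟨g, hg, hgT⟩ := hG T hT
  ⟨g, hGG' hg, hgT⟩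

section Trace

variable {X : Type*}

/-- The trace `{g ∩ S | g ∈ G}`, as a family of subsets of the finite type `S`. -/
noncomputable def setTrace (G : Set (Set X)) (S : Finset X) : Finset (Finset S) :=
  univ.filter fun T => ∃ g ∈ G, ∀ a : S, a ∈ T ↔ (a : X) ∈ g

lemma filter_mem_setTrace {G : Set (Set X)} {g : Set X} (hg : g ∈ G) (S : Finset X) :
    univ.filter (fun a : S => (a : X) ∈ g) ∈ setTrace G S :=
  mem_filter.2 ⟨mem_univ _, g, hg, fun a => by simp⟩

lemma setShatters_of_shatters_setTrace {G : Set (Set X)} {S : Finset X} {s : Finset S}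
    (hs : (setTrace G S).Shatters s) : SetShatters G (s.map (Function.Embedding.subtype _)) := by
  intro T hT
  obtain ⟨u, hu, hsu⟩ := hs (filter_subset (fun a : S => (a : X) ∈ T) s)
  obtain ⟨-, g, hg, hug⟩ := mem_filter.1 hu
  refine ⟨g, hg, fun x hx => ?_⟩
  obtain ⟨a, ha, rfl⟩ := mem_map.1 hx
  have := congrArg (a ∈ ·) hsu
  simp only [mem_inter, mem_filter, ha, true_and, hug, eq_iff_iff] at this
  exact this

lemma vcDim_setTrace_le {G : Set (Set X)} {d : ℕ}
    (hG : ∀ S : Finset X, SetShatters G S → S.card ≤ d) (S : Finset X) :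
    (setTrace G S).vcDim ≤ d :=
  Finset.sup_le fun s hs =>
    card_map (s := s) (Function.Embedding.subtype _) ▸
      hG _ (setShatters_of_shatters_setTrace (mem_shatterer.1 hs))

/-- Sauer–Shelah, in the polynomial form `(|S| + 1) ^ d`. -/
lemma card_setTrace_le {G : Set (Set X)} {d : ℕ}
    (hG : ∀ S : Finset X, SetShatters G S → S.card ≤ d) (S : Finset X) :
    (setTrace G S).card ≤ (S.card + 1) ^ d :=
  calc (setTrace G S).card ≤ (setTrace G S).shatterer.card := card_le_card_shatterer _
    _ ≤ ∑ k ∈ Iic (setTrace G S).vcDim, (Fintype.card S).choose k :=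
      card_shatterer_le_sum_vcDim
    _ ≤ ∑ k ∈ Iic d, (Fintype.card S).choose k :=
      sum_le_sum_of_subset (Iic_subset_Iic.2 (vcDim_setTrace_le hG S))
    _ ≤ (S.card + 1) ^ d := Fintype.card_coe S ▸ sum_choose_le_succ_pow _ _

lemma two_pow_card_le_of_setShatters_image2_inter {A B : Set (Set X)} {S : Finset X}
    (hS : SetShatters (Set.image2 (· ∩ ·) A B) S) :
    2 ^ S.card ≤ (setTrace A S).card * (setTrace B S).card := by
  have hcover : (univ : Finset (Finset S)) ⊆
      (setTrace A S ×ˢ setTrace B S).image fun p => p.1 ∩ p.2 := by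
    intro T _
    obtain ⟨_, ⟨a, ha, b, hb, rfl⟩, hT⟩ := hS (T.map (Function.Embedding.subtype _))
      fun x hx => by obtain ⟨y, -, rfl⟩ := mem_map.1 hx; exact y.2
    refine mem_image.2 ⟨(univ.filter (fun y : S => (y : X) ∈ a),
      univ.filter (fun y : S => (y : X) ∈ b)),
      mem_product.2 ⟨filter_mem_setTrace ha S, filter_mem_setTrace hb S⟩, ?_⟩
    ext x
    simpa using hT x x.2
  calc 2 ^ S.card = (univ : Finset (Finset S)).card := by simp
    _ ≤ _ := (card_le_card hcover).trans card_image_le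
    _ = _ := card_product _ _

end Trace

section Disagreement

variable {X : Type*}

lemma shatters_of_setShatters_disagreements {H : Set (X → Bool)} {cs : X → Bool} {S : Finset X}
    (hS : SetShatters ((fun h => {x | h x ≠ cs x}) '' H) S) : Shatters H S := by
  intro b
  obtain ⟨_, ⟨h, hh, rfl⟩, hT⟩ := hS (S.filter fun x => b x ≠ cs x) (filter_subset _ _)
  refine ⟨h, hh, fun x hx => ?_⟩
  have := hT x hx
  simp only [Set.mem_ofPred_eq, mem_filter, hx, true_and] at this
  revert this
  cases h x <;> cases b x <;> cases cs x <;> simp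

lemma Shatters.setShatters_supports {F : Set (X → Bool)} {S : Finset X} (hS : Shatters F S) :
    SetShatters ((fun f => {x | f x = true}) '' F) S := by
  intro T _
  obtain ⟨f, hf, hfT⟩ := hS fun x => decide (x ∈ T)
  exact ⟨_, ⟨f, hf, rfl⟩, fun x hx => by simp [hfT x hx]⟩

lemma supports_subset_image2_inter (G : Set (Set X)) (H : Set (X → Bool)) (cs : X → Bool) :
    (fun f => {x | f x = true}) ''
        {f : X → Bool | ∃ g ∈ G, ∃ c ∈ GRConcepts G H,
          f = fun x => decide (x ∈ g) && decide (c x ≠ cs x)} ⊆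
      Set.image2 (· ∩ ·) G ((fun h => {x | h x ≠ cs x}) '' H) := by
  rintro _ ⟨_, ⟨g, hg, c, hc, rfl⟩, rfl⟩
  obtain ⟨h, hh, hch⟩ := hc g hg
  refine ⟨g, hg, _, ⟨h, hh, rfl⟩, ?_⟩
  ext x
  simp only [Set.mem_inter_iff, Set.mem_ofPred_eq, Bool.and_eq_true, decide_eq_true_eq]
  exact and_congr_right fun hx => by rw [hch x hx]

end Disagreement

lemma two_pow_card_le_succ_pow_of_shatters {X : Type*} {G : Set (Set X)} {H : Set (X → Bool)}
    {dG dH : ℕ} (hG : ∀ S : Finset X, SetShatters G S → S.card ≤ dG)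
    (hH : ∀ S : Finset X, Shatters H S → S.card ≤ dH) {cs : X → Bool} {S : Finset X}
    (hS : Shatters {f : X → Bool | ∃ g ∈ G, ∃ c ∈ GRConcepts G H,
        f = fun x => decide (x ∈ g) && decide (c x ≠ cs x)} S) :
    2 ^ S.card ≤ (S.card + 1) ^ (dG + dH) :=
  calc 2 ^ S.card
        ≤ (setTrace G S).card * (setTrace ((fun h => {x | h x ≠ cs x}) '' H) S).card :=
        two_pow_card_le_of_setShatters_image2_inter
          (hS.setShatters_supports.mono (supports_subset_image2_inter G H cs))
    _ ≤ (S.card + 1) ^ dG * (S.card + 1) ^ dH :=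
        Nat.mul_le_mul (card_setTrace_le hG S)
          (card_setTrace_le (fun T hT => hH T (shatters_of_setShatters_disagreements hT)) S)
    _ = (S.card + 1) ^ (dG + dH) := (pow_add _ _ _).symm

open Real in
lemma le_mul_log_of_two_pow_le_succ_pow {n d : ℕ} (h : 2 ^ n ≤ (n + 1) ^ d) :
    (n : ℝ) ≤ 5 * d * log (d + 1) := by
  have hlog : n * log 2 ≤ d * log (n + 1) := by
    rw [← log_pow, ← log_pow]
    exact log_le_log (by positivity) (by exact_mod_cast h)
  have hlog2 := log_two_gt_d9
  rcases Nat.eq_zero_or_pos d with rfl | hd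
  · push_cast at hlog ⊢
    nlinarith
  have hd : (1 : ℝ) ≤ d := by exact_mod_cast hd
  -- `log t ≤ t / m - 1 + log m`, applied with `m = 4d`
  have hsplit : log (n + 1) ≤ (n + 1) / (4 * d) - 1 + log (4 * d) := by
    have := log_le_sub_one_of_pos (x := (n + 1) / (4 * d)) (by positivity)
    rw [log_div (by positivity) (by positivity)] at this
    linarith
  have h4d : log (4 * d) ≤ 2 * log (d + 1) := by
    have := log_le_log (x := 4 * d) (y := (d + 1) ^ 2) (by positivity) (by nlinarith)
    rwa [log_pow, Nat.cast_ofNat] at this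
  have hL : 0 ≤ d * log (d + 1) := mul_nonneg (by positivity) (log_nonneg (by linarith))
  have hmain : n * (log 2 - 1 / 4) ≤ 2 * d * log (d + 1) :=
    calc n * (log 2 - 1 / 4) ≤ d * log (n + 1) - n / 4 := by linarith
      _ ≤ d * ((n + 1) / (4 * d) - 1 + 2 * log (d + 1)) - n / 4 := by gcongr; linarith
      _ = 1 / 4 - d + 2 * d * log (d + 1) := by field_simp; ring
      _ ≤ 2 * d * log (d + 1) := by linarith
  nlinarith

theorem stmt13 :
    ∃ K : ℝ, 0 < K ∧
      ∀ (X : Type) (G : Set (Set X)) (H : Set (X → Bool)) (dG dH : ℕ),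
        -- G has VC dimension at most dG
        (∀ S : Finset X, SetShatters G S → S.card ≤ dG) →
        -- H has VC dimension at most dH
        (∀ S : Finset X, Shatters H S → S.card ≤ dH) →
        ∀ cs : X → Bool,
          -- the class F = { 1[·∈g]·1[c ≠ c*] : g ∈ G, c ∈ C(G,H) } has VC
          -- dimension at most O((dG + dH) · log(dG + dH + 1))
          ∀ S : Finset X,
            Shatters {f : X → Bool | ∃ g ∈ G, ∃ c ∈ GRConcepts G H,
                f = fun x => decide (x ∈ g) && decide (c x ≠ cs x)} S →
              (S.card : ℝ) ≤ K * ((dG + dH) * Real.log (dG + dH + 1)) := by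
  refine ⟨5, by norm_num, fun X G H dG dH hG hH cs S hS => ?_⟩
  have := le_mul_log_of_two_pow_le_succ_pow (two_pow_card_le_succ_pow_of_shatters hG hH hS)
  push_cast at this
  linarith
end
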